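/- Claim (limits of the weights): Let f be a diffeomorphism of a compact boundaryless finite-dimensional manifold M with finitely many pairwise disjoint attractors Λ_1,…,Λ_N satisfying Conditions A and B of Theorem A for a physical random perturbation F, and for ε ∈ (0, min{ε_1,…,ε_N}) let μ_1^ε,…,μ_N^ε be the localized physical measures. Define α_i^ε(x) = ν_ε^∞{t̲ ∈ Δ_ε : there exists k ≥ 1 with f^k(x,t̲) ∈ supp μ_i^ε} and β_i^ε = ∫ α_i^ε(x) dm(x). Then lim_{ε→0⁺} β_i^ε = m(W^s(Λ_i)) for each i = 1,…,N. -/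

import Mathlib

open MeasureTheory Metric Filter Topology Set
open scoped Manifold ENNReal

noncomputable section

/-- The parameter space `ℝⁿ` of the random perturbations. -/
abbrev Par (n : ℕ) : Type := EuclideanSpace ℝ (Fin n)

/-- Normalized Lebesgue measure on the closed `ε`-ball of `ℝⁿ`. -/
noncomputable def ballMeasure (n : ℕ) (ε : ℝ) : Measure (Par n) :=
  (volume (closedBall (0 : Par n) ε))⁻¹ • volume.restrict (closedBall (0 : Par n) ε)

/-- The perturbation space `Δ_ε`: sequences of parameter vectors of norm at most `ε`. -/
def Delta (n : ℕ) (ε : ℝ) : Set (ℕ → Par n) := {t | ∀ j, ‖t j‖ ≤ ε}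

/-- The perturbed iterates `f^j(x, t̲) = f_{t_j} ∘ ⋯ ∘ f_{t_1} (x)`. -/
def iterP {M : Type*} {n : ℕ} (F : M → Par n → M) : ℕ → M → (ℕ → Par n) → M
  | 0, x, _ => x
  | k + 1, x, t => F (iterP F k x t) (t k)

/-- `ν` is the infinite product `ν_ε^∞` of the normalized Lebesgue measures on the closed
`ε`-ball, characterized as the probability measure with the correct finite-dimensional
marginals on cylinder sets. -/
def IsProductNoise {n : ℕ} (ε : ℝ) (ν : Measure (ℕ → Par n)) : Prop :=
  IsProbabilityMeasure ν ∧
    ∀ (k : ℕ) (s : Fin k → Set (Par n)), (∀ i, MeasurableSet (s i)) →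
      ν {t | ∀ i : Fin k, t (i : ℕ) ∈ s i} = ∏ i, ballMeasure n ε (s i)

/-- The support of a measure: the points all of whose open neighborhoods have
positive measure. -/
def mSupp {M : Type*} [TopologicalSpace M] [MeasurableSpace M] (μ : Measure M) : Set M :=
  {x | ∀ U : Set M, IsOpen U → x ∈ U → 0 < μ U}

/-- The time averages of every continuous function along the random orbit of `x` driven by
the perturbation vector `t̲` converge to the space average w.r.t. `μ`, i.e. the empirical
measures `(1/N) ∑_{j<N} δ_{f^j(x,t̲)}` converge weakly* to `μ`. -/
def AvgTendsto {M : Type*} [TopologicalSpace M] [MeasurableSpace M] {n : ℕ}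
    (F : M → Par n → M) (x : M) (t : ℕ → Par n) (μ : Measure M) : Prop :=
  ∀ φ : C(M, ℝ),
    Tendsto (fun N : ℕ => (N : ℝ)⁻¹ * ∑ j ∈ Finset.range N, φ (iterP F j x t))
      atTop (𝓝 (∫ y, φ y ∂μ))

/-- The basin `B(μ)` of a measure `μ` under the noise `ν`. -/
def measBasin {M : Type*} [TopologicalSpace M] [MeasurableSpace M] {n : ℕ}
    (ν : Measure (ℕ → Par n)) (F : M → Par n → M) (μ : Measure M) : Set M :=
  {x | ∀ᵐ t ∂ν, AvgTendsto F x t μ}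

/-- A physical measure for the perturbation with noise `ν`: a probability measure whose
basin has positive volume. -/
def IsPhysicalMeasure {M : Type*} [TopologicalSpace M] [MeasurableSpace M] {n : ℕ}
    (m : Measure M) (ν : Measure (ℕ → Par n)) (F : M → Par n → M) (μ : Measure M) : Prop :=
  IsProbabilityMeasure μ ∧ 0 < m (measBasin ν F μ)

/-- The mean sojourn time of the random orbits of `x` exists and equals `μ`:
`(1/N) ∑_{j<N} f^j(x,·)_* ν → μ` weakly*. -/
def SojournTime {M : Type*} [TopologicalSpace M] [MeasurableSpace M] {n : ℕ}
    (ν : Measure (ℕ → Par n)) (F : M → Par n → M) (x : M) (μ : Measure M) : Prop :=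
  ∀ φ : C(M, ℝ),
    Tendsto
      (fun N : ℕ => (N : ℝ)⁻¹ * ∑ j ∈ Finset.range N, ∫ t, φ (iterP F j x t) ∂ν)
      atTop (𝓝 (∫ y, φ y ∂μ))

/-- The mean sojourn time of the whole random system exists and equals `μ`. -/
def GlobalSojourn {M : Type*} [TopologicalSpace M] [MeasurableSpace M] {n : ℕ}
    (m : Measure M) (ν : Measure (ℕ → Par n)) (F : M → Par n → M) (μ : Measure M) : Prop :=
  ∀ φ : C(M, ℝ),
    Tendsto
      (fun N : ℕ => (N : ℝ)⁻¹ *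
        ∑ j ∈ Finset.range N, ∫ x, (∫ t, φ (iterP F j x t) ∂ν) ∂m)
      atTop (𝓝 (∫ y, φ y ∂μ))

/-- The skew product `S_ε (x, t̲) = (f_{t₁} x, σ t̲)`. -/
def skewProd {M : Type*} {n : ℕ} (F : M → Par n → M) :
    M × (ℕ → Par n) → M × (ℕ → Par n) :=
  fun p => (F p.1 (p.2 0), fun j => p.2 (j + 1))

/-- An attractor of `f`: a compact invariant set with a trapping neighborhood `U` with
`Λ = ⋂_{k ≥ 1} f^k (closure U)` and a point with dense forward orbit. -/
structure IsAttractor {M : Type*} [MetricSpace M] (f : M → M) (Λ : Set M) : Prop where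
  compact : IsCompact Λ
  invariant : f '' Λ = Λ
  trapped : ∃ U : Set M, IsOpen U ∧ Λ ⊆ U ∧ f '' closure U ⊆ U ∧
    Λ = ⋂ k : ℕ, f^[k + 1] '' closure U
  transitive : ∃ x ∈ Λ, closure (range fun k : ℕ => f^[k + 1] x) = Λ

/-- The basin of attraction `W^s(Λ)`. -/
def basinAttr {M : Type*} [MetricSpace M] (f : M → M) (Λ : Set M) : Set M :=
  {x | Tendsto (fun k => infDist (f^[k] x) Λ) atTop (𝓝 0)}

/-- `F`, together with the noise measures `ν ε`, the thresholds `K ε` and the radii `ξ ε`,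
is a physical random perturbation of the diffeomorphism `f` of the compact boundaryless
manifold `M` with reference (Riemannian volume) measure `m`, for noise levels in `(0, ε₀)`. -/
structure IsPhysPert (d : ℕ) {n : ℕ} {M : Type*} [MetricSpace M] [CompactSpace M]
    [ChartedSpace (EuclideanSpace ℝ (Fin d)) M] [IsManifold (𝓡 d) (⊤ : ℕ∞) M]
    [MeasurableSpace M] [BorelSpace M]
    (f : M → M) (m : Measure M) (F : M → Par n → M)
    (ν : ℝ → Measure (ℕ → Par n)) (K : ℝ → ℕ) (ξ : ℝ → ℝ) (ε₀ : ℝ) : Prop where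
  eps0_mem : ε₀ ∈ Ioo (0 : ℝ) 1
  smooth : ContMDiff ((𝓡 d).prod (𝓘(ℝ, Par n))) (𝓡 d) 1 (Function.uncurry F)
  diffeo : ∀ t : Par n, ‖t‖ < 1 →
    ∃ g : Diffeomorph (𝓡 d) (𝓡 d) M M 1, ∀ x, g x = F x t
  base : ∀ x : M, F x 0 = f x
  noise : ∀ ε ∈ Ioo (0 : ℝ) ε₀, IsProductNoise ε (ν ε)
  xi_pos : ∀ ε ∈ Ioo (0 : ℝ) ε₀, 0 < ξ ε
  cover : ∀ ε ∈ Ioo (0 : ℝ) ε₀, ∀ x : M, ∀ j ≥ K ε,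
    ball (f^[j] x) (ξ ε) ⊆ (fun t => iterP F j x t) '' Delta n ε
  absCont : ∀ ε ∈ Ioo (0 : ℝ) ε₀, ∀ x : M, ∀ k ≥ K ε,
    (ν ε).map (fun t => iterP F k x t) ≪ m

/-- The family `ε ↦ με ε`, `0 < ε < εthr`, of localized physical measures near the
attractor `Λ`, inside a completely forward invariant open neighborhood `U` of `Λ`
(the conclusion of the localization proposition). -/
def IsLocalizedPhysFamily {M : Type*} [MetricSpace M] [MeasurableSpace M] {n : ℕ}
    (F : M → Par n → M) (ν : ℝ → Measure (ℕ → Par n))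
    (Λ U : Set M) (εthr : ℝ) (με : ℝ → Measure M) : Prop :=
  0 < εthr ∧ IsOpen U ∧ Λ ⊆ U ∧
    ∀ ε ∈ Ioo (0 : ℝ) εthr,
      IsProbabilityMeasure (με ε) ∧ Λ ⊆ mSupp (με ε) ∧ mSupp (με ε) ⊆ U ∧
      (∀ t : Par n, ‖t‖ ≤ ε → (fun x => F x t) '' closure U ⊆ U) ∧
      ∀ x ∈ U, ∀ᵐ t ∂(ν ε), AvgTendsto F x t (με ε)

/-- Weak* convergence `με ε → μ` as `ε → 0⁺`. -/
def WeakStarAtZero {M : Type*} [TopologicalSpace M] [MeasurableSpace M]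
    (με : ℝ → Measure M) (μ : Measure M) : Prop :=
  ∀ φ : C(M, ℝ),
    Tendsto (fun ε => ∫ y, φ y ∂(με ε)) (𝓝[>] (0 : ℝ)) (𝓝 (∫ y, φ y ∂μ))

/-- `Λ` is a stochastically stable attractor: it carries an `f`-invariant probability
measure `μ` with `supp μ = Λ` to which the localized physical measures `με ε` converge
weakly* as the noise level tends to zero. -/
def IsStochasticallyStable {M : Type*} [MetricSpace M] [MeasurableSpace M]
    (f : M → M) (Λ : Set M) (μ : Measure M) (με : ℝ → Measure M) : Prop :=
  IsProbabilityMeasure μ ∧ μ.map f = μ ∧ mSupp μ = Λ ∧ WeakStarAtZero με μ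

/-! ### Auxiliary lemmas -/

section Aux

variable {M : Type*} {n : ℕ}

lemma iterP_add (F : M → Par n → M) (k₀ k : ℕ) (x : M) (t : ℕ → Par n) :
    iterP F (k₀ + k) x t = iterP F k (iterP F k₀ x t) (fun j => t (k₀ + j)) := by
  induction k with
  | zero => rfl
  | succ k ih => show iterP F (k₀ + k + 1) x t = _; rw [iterP, ih]; rfl

lemma iterP_congr (F : M → Par n → M) {k : ℕ} (x : M) {t t' : ℕ → Par n}
    (h : ∀ j < k, t j = t' j) : iterP F k x t = iterP F k x t' := by
  induction k with
  | zero => rfl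
  | succ k ih =>
      show F (iterP F k x t) (t k) = F (iterP F k x t') (t' k)
      rw [ih (fun j hj => h j (hj.trans (Nat.lt_succ_self k))), h k (Nat.lt_succ_self k)]

/-- Extension of a finite vector of parameters by `0`. -/
def extPar {n : ℕ} (k : ℕ) (p : Fin k → Par n) : ℕ → Par n :=
  fun j => if h : j < k then p ⟨j, h⟩ else 0

lemma extPar_agree {k : ℕ} (p : Fin k → Par n) (j : ℕ) (hj : j < k) :
    extPar k p j = p ⟨j, hj⟩ := dif_pos hj

lemma iterP_extPar (F : M → Par n → M) (k : ℕ) (x : M) (t : ℕ → Par n) :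
    iterP F k x (extPar k (fun i : Fin k => t i)) = iterP F k x t :=
  iterP_congr F x fun j hj => by simp [extPar_agree _ j hj]

section Cont

variable [TopologicalSpace M]

lemma continuous_iterP (F : M → Par n → M) (hF : Continuous (Function.uncurry F)) (k : ℕ) :
    Continuous fun q : M × (ℕ → Par n) => iterP F k q.1 q.2 := by
  induction k with
  | zero => exact continuous_fst
  | succ k ih =>
      exact hF.comp (ih.prodMk ((continuous_apply k).comp continuous_snd))

lemma continuous_iterP_right (F : M → Par n → M) (hF : Continuous (Function.uncurry F))
    (k : ℕ) (x : M) : Continuous fun t : ℕ → Par n => iterP F k x t :=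
  (continuous_iterP F hF k).comp (Continuous.prodMk_right x)

lemma continuous_extPar (k : ℕ) : Continuous fun p : Fin k → Par n => extPar k p := by
  refine continuous_pi fun j => ?_
  by_cases h : j < k
  · simpa [extPar, h] using continuous_apply (⟨j, h⟩ : Fin k)
  · simpa [extPar, h] using continuous_const

end Cont

end Aux
section BallMeasure

variable {n : ℕ}

lemma ballVol_pos {ε : ℝ} (hε : 0 < ε) : 0 < volume (closedBall (0 : Par n) ε) :=
  measure_closedBall_pos _ _ hε

lemma ballVol_lt_top (ε : ℝ) : volume (closedBall (0 : Par n) ε) < ∞ :=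
  (isCompact_closedBall _ _).measure_lt_top

lemma ballMeasure_prob {ε : ℝ} (hε : 0 < ε) : IsProbabilityMeasure (ballMeasure n ε) := by
  constructor
  rw [ballMeasure, Measure.smul_apply, Measure.restrict_apply MeasurableSet.univ,
    Set.univ_inter, smul_eq_mul, ENNReal.inv_mul_cancel (ballVol_pos hε).ne' (ballVol_lt_top ε).ne]

lemma ballMeasure_pos_of_open {ε : ℝ} (hε : 0 < ε) {W : Set (Par n)} (hW : IsOpen W)
    {w : Par n} (hwW : w ∈ W) (hw : ‖w‖ ≤ ε) : 0 < ballMeasure n ε W := by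
  obtain ⟨δ, hδ, hball⟩ := Metric.isOpen_iff.1 hW w hwW
  -- a point close to `w` with norm `< ε`
  set θ : ℝ := min (δ / (2 * (ε + 1))) (1 / 2) with hθdef
  have hθ0 : 0 < θ := lt_min (by positivity) (by norm_num)
  have hθ1 : θ ≤ 1/2 := min_le_right _ _
  set w' : Par n := (1 - θ) • w with hw'def
  have hww' : ‖w' - w‖ < δ := by
    have : w' - w = (-θ) • w := by rw [hw'def]; module
    rw [this, norm_smul, norm_neg, Real.norm_eq_abs, abs_of_pos hθ0]
    calc θ * ‖w‖ ≤ (δ / (2 * (ε + 1))) * (ε + 1) := by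
          apply mul_le_mul (min_le_left _ _) (hw.trans (by linarith)) (norm_nonneg _)
          positivity
      _ = δ / 2 := by field_simp
      _ < δ := by linarith
  have hw' : ‖w'‖ < ε := by
    rw [hw'def, norm_smul, Real.norm_eq_abs, abs_of_pos (by linarith [hθ1] : (0:ℝ) < 1 - θ)]
    rcases eq_or_lt_of_le (norm_nonneg w) with h0 | h0
    · rw [← h0, mul_zero]; exact hε
    · calc (1 - θ) * ‖w‖ < 1 * ‖w‖ := by
            apply mul_lt_mul_of_pos_right _ h0; linarith
        _ ≤ ε := by rw [one_mul]; exact hw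
  set r : ℝ := min (δ - ‖w' - w‖) (ε - ‖w'‖) with hrdef
  have hr : 0 < r := lt_min (by linarith) (by linarith)
  have hsub : Metric.ball w' r ⊆ W ∩ closedBall (0 : Par n) ε := by
    intro y hy
    rw [mem_ball] at hy
    constructor
    · apply hball
      rw [mem_ball]
      calc dist y w ≤ dist y w' + dist w' w := dist_triangle _ _ _
        _ < r + ‖w' - w‖ := by
            rw [dist_eq_norm w' w]; exact add_lt_add_left hy _
        _ ≤ (δ - ‖w' - w‖) + ‖w' - w‖ := by
            exact add_le_add_left (min_le_left _ _) _
        _ = δ := by ring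
    · rw [Metric.mem_closedBall, dist_zero_right]
      calc ‖y‖ = ‖(y - w') + w'‖ := by rw [sub_add_cancel]
        _ ≤ ‖y - w'‖ + ‖w'‖ := norm_add_le _ _
        _ ≤ r + ‖w'‖ := by
            apply add_le_add_left _ _
            rw [← dist_eq_norm]; exact hy.le
        _ ≤ (ε - ‖w'‖) + ‖w'‖ := add_le_add_left (min_le_right _ _) _
        _ = ε := by ring
  have hpos : 0 < volume (Metric.ball w' r) := measure_ball_pos _ _ hr
  rw [ballMeasure, Measure.smul_apply, smul_eq_mul]
  apply ENNReal.mul_pos (by simp [ENNReal.inv_ne_zero, (ballVol_lt_top (n := n) ε).ne])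
  refine ne_of_gt ?_
  calc 0 < volume (Metric.ball w' r) := hpos
    _ ≤ volume.restrict (closedBall (0 : Par n) ε) W := by
        rw [Measure.restrict_apply' (measurableSet_closedBall)]
        exact measure_mono (fun y hy => ⟨(hsub hy).1, (hsub hy).2⟩)

end BallMeasure
section Cylinders

variable {n : ℕ}

/-- A finite-dimensional cylinder ("box") in the sequence space. -/
def nbox (n : ℕ) (k : ℕ) (s : Fin k → Set (Par n)) : Set (ℕ → Par n) :=
  {t | ∀ i : Fin k, t (i : ℕ) ∈ s i}

/-- The collection of all boxes with measurable sides. -/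
def nboxes (n : ℕ) : Set (Set (ℕ → Par n)) :=
  {B | ∃ (k : ℕ) (s : Fin k → Set (Par n)), (∀ i, MeasurableSet (s i)) ∧ B = nbox n k s}

lemma measurableSet_nbox {k : ℕ} {s : Fin k → Set (Par n)} (hs : ∀ i, MeasurableSet (s i)) :
    MeasurableSet (nbox n k s) := by
  have : nbox n k s = ⋂ i : Fin k, (fun t : ℕ → Par n => t (i : ℕ)) ⁻¹' (s i) := by
    ext t; simp [nbox]
  rw [this]
  exact MeasurableSet.iInter fun i => (measurable_pi_apply _) (hs i)

lemma nbox_inter {k k' : ℕ} (s : Fin k → Set (Par n)) (s' : Fin k' → Set (Par n)) :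
    nbox n k s ∩ nbox n k' s' =
      nbox n (max k k') (fun i =>
        (if h : (i : ℕ) < k then s ⟨i, h⟩ else univ) ∩
        (if h : (i : ℕ) < k' then s' ⟨i, h⟩ else univ)) := by
  ext t
  simp only [nbox, mem_inter_iff, mem_setOf_eq]
  constructor
  · rintro ⟨h1, h2⟩ i
    constructor
    · by_cases h : (i : ℕ) < k
      · simpa [h] using h1 ⟨i, h⟩
      · simp [h]
    · by_cases h : (i : ℕ) < k'
      · simpa [h] using h2 ⟨i, h⟩
      · simp [h]
  · intro h
    constructor
    · intro i
      have := (h ⟨i, lt_of_lt_of_le i.2 (le_max_left k k')⟩).1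
      simpa [i.2] using this
    · intro i
      have := (h ⟨i, lt_of_lt_of_le i.2 (le_max_right k k')⟩).2
      simpa [i.2] using this

lemma isPiSystem_nboxes : IsPiSystem (nboxes n) := by
  rintro B ⟨k, s, hs, rfl⟩ B' ⟨k', s', hs', rfl⟩ -
  refine ⟨max k k', _, fun i => ?_, nbox_inter s s'⟩
  apply MeasurableSet.inter
  · by_cases h : (i : ℕ) < k <;> simp [h, hs]
  · by_cases h : (i : ℕ) < k' <;> simp [h, hs']

lemma eval_preimage_eq_nbox (j : ℕ) (A : Set (Par n)) :
    (fun t : ℕ → Par n => t j) ⁻¹' A =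
      nbox n (j + 1) (fun i => if (i : ℕ) = j then A else univ) := by
  ext t
  simp only [mem_preimage, nbox, mem_setOf_eq]
  constructor
  · intro h i
    by_cases hij : (i : ℕ) = j
    · simpa [hij] using h
    · simp [hij]
  · intro h
    have := h ⟨j, Nat.lt_succ_self j⟩
    simpa using this

lemma generateFrom_nboxes :
    MeasurableSpace.generateFrom (nboxes n) = (by infer_instance : MeasurableSpace (ℕ → Par n)) := by
  apply le_antisymm
  · rw [MeasurableSpace.generateFrom_le_iff]
    rintro B ⟨k, s, hs, rfl⟩
    exact measurableSet_nbox hs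
  · have h : ∀ j : ℕ, @Measurable (ℕ → Par n) (Par n)
        (MeasurableSpace.generateFrom (nboxes n)) _ (fun t => t j) := by
      intro j A hA
      rw [eval_preimage_eq_nbox]
      apply MeasurableSpace.measurableSet_generateFrom
      refine ⟨j + 1, _, fun i => ?_, rfl⟩
      by_cases hij : (i : ℕ) = j <;> simp [hij, hA]
    intro B hB
    exact (@measurable_pi_iff (ℕ → Par n) ℕ (fun _ => Par n)
      (MeasurableSpace.generateFrom (nboxes n)) _ id).2 h hB

end Cylinders
section Noise

variable {n : ℕ} {ε : ℝ} {ν : Measure (ℕ → Par n)}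

lemma noise_nbox (hν : IsProductNoise ε ν) {k : ℕ} {s : Fin k → Set (Par n)}
    (hs : ∀ i, MeasurableSet (s i)) :
    ν (nbox n k s) = ∏ i, ballMeasure n ε (s i) := hν.2 k s hs

lemma ballMeasure_closedBall (hε : 0 < ε) :
    ballMeasure n ε (closedBall (0 : Par n) ε) = 1 := by
  rw [ballMeasure, Measure.smul_apply, Measure.restrict_apply measurableSet_closedBall,
    Set.inter_self, smul_eq_mul,
    ENNReal.inv_mul_cancel (ballVol_pos hε).ne' (ballVol_lt_top ε).ne]

lemma noise_ae_mem_Delta (hν : IsProductNoise ε ν) (hε : 0 < ε) :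
    ∀ᵐ t ∂ν, t ∈ Delta n ε := by
  haveI := hν.1
  haveI := ballMeasure_prob (n := n) hε
  have hone : ∀ j : ℕ, ν {t : ℕ → Par n | t j ∈ closedBall (0 : Par n) ε} = 1 := by
    intro j
    have h := hν.2 (j + 1)
      (fun i => if (i : ℕ) = j then closedBall (0 : Par n) ε else univ)
      (fun i => by by_cases h : (i : ℕ) = j <;> simp [h, measurableSet_closedBall])
    have hset : {t : ℕ → Par n |
        ∀ i : Fin (j + 1), t (i : ℕ) ∈ (if (i : ℕ) = j then closedBall (0 : Par n) ε else univ)}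
        = {t : ℕ → Par n | t j ∈ closedBall (0 : Par n) ε} := by
      ext t
      simp only [mem_setOf_eq]
      constructor
      · intro h'
        have := h' ⟨j, Nat.lt_succ_self j⟩
        simpa using this
      · intro h' i
        by_cases hij : (i : ℕ) = j
        · simpa [hij] using h'
        · simp [hij]
    rw [hset] at h
    rw [h]
    rw [Finset.prod_eq_one]
    intro i _
    by_cases hij : (i : ℕ) = j
    · simp [hij, ballMeasure_closedBall hε]
    · simp [hij]
  have hnull : ∀ j : ℕ, ν {t : ℕ → Par n | ¬ t j ∈ closedBall (0 : Par n) ε} = 0 := by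
    intro j
    have hm : MeasurableSet {t : ℕ → Par n | t j ∈ closedBall (0 : Par n) ε} :=
      (measurable_pi_apply j) measurableSet_closedBall
    have := measure_compl hm (measure_ne_top ν _)
    rw [hone j, measure_univ] at this
    simpa [compl_setOf] using this
  have : ν (⋃ j : ℕ, {t : ℕ → Par n | ¬ t j ∈ closedBall (0 : Par n) ε}) = 0 :=
    measure_iUnion_null hnull
  rw [MeasureTheory.ae_iff]
  refine measure_mono_null (fun t ht => ?_) this
  simp only [Delta, mem_setOf_eq, not_forall] at ht
  obtain ⟨j, hj⟩ := ht
  exact mem_iUnion.2 ⟨j, by simpa [mem_closedBall, dist_zero_right] using hj⟩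

/-- The prefix map to the first `k` coordinates. -/
lemma measurable_prefixMap (k : ℕ) :
    Measurable (fun t : ℕ → Par n => fun i : Fin k => t (i : ℕ)) :=
  measurable_pi_lambda _ fun i => measurable_pi_apply _

lemma measurable_shiftMap (k : ℕ) :
    Measurable (fun t : ℕ → Par n => fun j : ℕ => t (k + j)) :=
  measurable_pi_lambda _ fun j => measurable_pi_apply _

lemma noise_map_prefix (hν : IsProductNoise ε ν) (hε : 0 < ε) (k : ℕ) :
    Measure.pi (fun _ : Fin k => ballMeasure n ε)
      = ν.map (fun t : ℕ → Par n => fun i : Fin k => t (i : ℕ)) := by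
  haveI := ballMeasure_prob (n := n) hε
  refine Measure.pi_eq fun s hs => ?_
  rw [Measure.map_apply (measurable_prefixMap k) (MeasurableSet.univ_pi hs)]
  have : (fun t : ℕ → Par n => fun i : Fin k => t (i : ℕ)) ⁻¹' (univ.pi s) = nbox n k s := by
    ext t; simp [nbox, mem_univ_pi]
  rw [this, noise_nbox hν hs]

end Noise
section Split

variable {n : ℕ} {ε : ℝ} {ν : Measure (ℕ → Par n)}

/-- The big box obtained from a `k₀`-box and a `k`-box. -/
def bigS (n k₀ k : ℕ) (s' : Fin k₀ → Set (Par n)) (s : Fin k → Set (Par n)) :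
    Fin (k₀ + k) → Set (Par n) :=
  fun i => if h : (i : ℕ) < k₀ then s' ⟨(i : ℕ), h⟩
    else s ⟨(i : ℕ) - k₀, by have := i.isLt; omega⟩

lemma split_inter_nbox (k₀ k : ℕ) (s' : Fin k₀ → Set (Par n)) (s : Fin k → Set (Par n)) :
    ((fun t : ℕ → Par n => fun i : Fin k₀ => t (i : ℕ)) ⁻¹' (univ.pi s'))
      ∩ ((fun t : ℕ → Par n => fun j : ℕ => t (k₀ + j)) ⁻¹' nbox n k s)
      = nbox n (k₀ + k) (bigS n k₀ k s' s) := by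
  ext t
  simp only [mem_inter_iff, mem_preimage, mem_univ_pi, nbox, mem_setOf_eq, bigS]
  constructor
  · rintro ⟨h1, h2⟩ i
    by_cases h : (i : ℕ) < k₀
    · rw [dif_pos h]; exact h1 ⟨(i : ℕ), h⟩
    · rw [dif_neg h]
      have h2' := h2 ⟨(i : ℕ) - k₀, by have := i.isLt; omega⟩
      have harg : k₀ + ((i : ℕ) - k₀) = (i : ℕ) := by omega
      rw [harg] at h2'
      exact h2'
  · intro h
    constructor
    · intro i
      have := h ⟨(i : ℕ), lt_of_lt_of_le i.isLt (Nat.le_add_right _ _)⟩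
      rwa [dif_pos i.isLt] at this
    · intro i
      have := h ⟨k₀ + (i : ℕ), by have := i.isLt; omega⟩
      rw [dif_neg (by simp only [Fin.val_mk]; omega)] at this
      simpa [Nat.add_sub_cancel_left] using this

lemma prod_bigS (k₀ k : ℕ) (s' : Fin k₀ → Set (Par n)) (s : Fin k → Set (Par n)) :
    ∏ i, ballMeasure n ε (bigS n k₀ k s' s i)
      = (∏ i, ballMeasure n ε (s' i)) * ∏ i, ballMeasure n ε (s i) := by
  rw [Fin.prod_univ_add]
  congr 1
  · apply Finset.prod_congr rfl
    intro i _
    congr 1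
    simp only [bigS, Fin.coe_castAdd, i.isLt, dif_pos]
  · apply Finset.prod_congr rfl
    intro i _
    congr 1
    simp only [bigS, Fin.coe_natAdd]
    rw [dif_neg (by omega)]
    congr 1
    ext
    simp

lemma noise_split_nbox (hν : IsProductNoise ε ν) (hε : 0 < ε) (k₀ : ℕ)
    {S : Set (Fin k₀ → Par n)} (hS : MeasurableSet S)
    {k : ℕ} {s : Fin k → Set (Par n)} (hs : ∀ i, MeasurableSet (s i)) :
    ν (((fun t : ℕ → Par n => fun i : Fin k₀ => t (i : ℕ)) ⁻¹' S)
        ∩ ((fun t : ℕ → Par n => fun j : ℕ => t (k₀ + j)) ⁻¹' nbox n k s))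
      = Measure.pi (fun _ : Fin k₀ => ballMeasure n ε) S * ∏ i, ballMeasure n ε (s i) := by
  haveI := hν.1
  haveI := ballMeasure_prob (n := n) hε
  set c : ℝ≥0∞ := ∏ i, ballMeasure n ε (s i) with hc
  set T : Set (ℕ → Par n) :=
    (fun t : ℕ → Par n => fun j : ℕ => t (k₀ + j)) ⁻¹' nbox n k s with hT
  have hTm : MeasurableSet T := (measurable_shiftMap k₀) (measurableSet_nbox hs)
  set ρ : Measure (Fin k₀ → Par n) :=
    (ν.restrict T).map (fun t : ℕ → Par n => fun i : Fin k₀ => t (i : ℕ)) with hρ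
  have key : ∀ (s' : Fin k₀ → Set (Par n)), (∀ i, MeasurableSet (s' i)) →
      ρ (univ.pi s') = (∏ i, ballMeasure n ε (s' i)) * c := by
    intro s' hs'
    rw [hρ, Measure.map_apply (measurable_prefixMap k₀) (MeasurableSet.univ_pi hs'),
      Measure.restrict_apply ((measurable_prefixMap k₀) (MeasurableSet.univ_pi hs')),
      hT, split_inter_nbox,
      noise_nbox hν (fun i => by
        by_cases h : (i : ℕ) < k₀
        · simpa [bigS, h] using hs' _
        · simpa [bigS, h] using hs _),
      prod_bigS]
  haveI : IsFiniteMeasure ρ := by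
    constructor
    rw [hρ, Measure.map_apply (measurable_prefixMap k₀) MeasurableSet.univ]
    exact lt_of_le_of_lt (measure_mono (subset_univ _)) (measure_lt_top _ univ)
  have hext : ρ = c • Measure.pi (fun _ : Fin k₀ => ballMeasure n ε) := by
    refine ext_of_generate_finite _ generateFrom_pi.symm isPiSystem_pi ?_ ?_
    · rintro B ⟨s', hs', rfl⟩
      rw [key s' (fun i => hs' i (mem_univ i)), Measure.smul_apply, Measure.pi_pi,
        smul_eq_mul, mul_comm]
    · have := key (fun _ => univ) (fun _ => MeasurableSet.univ)
      simp only [pi_univ] at this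
      rw [this, Measure.smul_apply, smul_eq_mul]
      simp [mul_comm]
  have := congrArg (fun μ : Measure (Fin k₀ → Par n) => μ S) hext
  simp only [Measure.smul_apply, smul_eq_mul] at this
  rw [hρ, Measure.map_apply (measurable_prefixMap k₀) hS,
    Measure.restrict_apply ((measurable_prefixMap k₀) hS)] at this
  rw [this, mul_comm]

lemma nbox_zero (s : Fin 0 → Set (Par n)) : nbox n 0 s = univ := by
  ext t; simp [nbox]

lemma noise_split (hν : IsProductNoise ε ν) (hε : 0 < ε) (k₀ : ℕ)
    {S : Set (Fin k₀ → Par n)} (hS : MeasurableSet S)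
    {T : Set (ℕ → Par n)} (hT : MeasurableSet T) :
    ν (((fun t : ℕ → Par n => fun i : Fin k₀ => t (i : ℕ)) ⁻¹' S)
        ∩ ((fun t : ℕ → Par n => fun j : ℕ => t (k₀ + j)) ⁻¹' T))
      = Measure.pi (fun _ : Fin k₀ => ballMeasure n ε) S * ν T := by
  haveI := hν.1
  haveI := ballMeasure_prob (n := n) hε
  set πB := Measure.pi (fun _ : Fin k₀ => ballMeasure n ε) with hπB
  have hprefS : MeasurableSet ((fun t : ℕ → Par n => fun i : Fin k₀ => t (i : ℕ)) ⁻¹' S) :=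
    (measurable_prefixMap k₀) hS
  set ρ : Measure (ℕ → Par n) :=
    (ν.restrict ((fun t : ℕ → Par n => fun i : Fin k₀ => t (i : ℕ)) ⁻¹' S)).map
      (fun t : ℕ → Par n => fun j : ℕ => t (k₀ + j)) with hρ
  haveI : IsFiniteMeasure ρ := by
    constructor
    rw [hρ, Measure.map_apply (measurable_shiftMap k₀) MeasurableSet.univ]
    exact lt_of_le_of_lt (measure_mono (subset_univ _)) (measure_lt_top _ univ)
  have hext : ρ = πB S • ν := by
    refine ext_of_generate_finite _ generateFrom_nboxes.symm isPiSystem_nboxes ?_ ?_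
    · rintro B ⟨k, s, hs, rfl⟩
      rw [hρ, Measure.map_apply (measurable_shiftMap k₀) (measurableSet_nbox hs),
        Measure.restrict_apply ((measurable_shiftMap k₀) (measurableSet_nbox hs)),
        inter_comm, noise_split_nbox hν hε k₀ hS hs, Measure.smul_apply, smul_eq_mul,
        noise_nbox hν hs]
    · rw [hρ, Measure.map_apply (measurable_shiftMap k₀) MeasurableSet.univ]
      simp only [preimage_univ, Measure.restrict_apply MeasurableSet.univ, univ_inter]
      have h0 := noise_split_nbox hν hε k₀ hS (k := 0)
        (s := fun i => (univ : Set (Par n))) (fun i => MeasurableSet.univ)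
      rw [nbox_zero] at h0
      simp only [preimage_univ, inter_univ, Finset.univ_eq_empty, Finset.prod_empty,
        mul_one] at h0
      rw [h0, Measure.smul_apply, smul_eq_mul, measure_univ, mul_one]
  have := congrArg (fun μ : Measure (ℕ → Par n) => μ T) hext
  simp only [Measure.smul_apply, smul_eq_mul] at this
  rw [hρ, Measure.map_apply (measurable_shiftMap k₀) hT,
    Measure.restrict_apply ((measurable_shiftMap k₀) hT), inter_comm] at this
  exact this

/-- The prefix–shift splitting map. -/
def splitMap (n k₀ : ℕ) : (ℕ → Par n) → (Fin k₀ → Par n) × (ℕ → Par n) :=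
  fun t => (fun i : Fin k₀ => t (i : ℕ), fun j : ℕ => t (k₀ + j))

lemma measurable_splitMap (k₀ : ℕ) : Measurable (splitMap n k₀) :=
  (measurable_prefixMap k₀).prodMk (measurable_shiftMap k₀)

theorem noise_map_split (hν : IsProductNoise ε ν) (hε : 0 < ε) (k₀ : ℕ) :
    (Measure.pi (fun _ : Fin k₀ => ballMeasure n ε)).prod ν = ν.map (splitMap n k₀) := by
  haveI := hν.1
  haveI := ballMeasure_prob (n := n) hε
  refine Measure.prod_eq fun S T hS hT => ?_
  rw [Measure.map_apply (measurable_splitMap k₀) (hS.prod hT)]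
  have : splitMap n k₀ ⁻¹' (S ×ˢ T)
      = ((fun t : ℕ → Par n => fun i : Fin k₀ => t (i : ℕ)) ⁻¹' S)
        ∩ ((fun t : ℕ → Par n => fun j : ℕ => t (k₀ + j)) ⁻¹' T) := rfl
  rw [this, noise_split hν hε k₀ hS hT]

end Split
section IntegralUtils

open MeasureTheory

variable {X : Type*} [MeasurableSpace X] [TopologicalSpace X] [OpensMeasurableSpace X]

lemma integrable_of_bounded {μ : Measure X} [IsFiniteMeasure μ] {f : X → ℝ} {C : ℝ}
    (hf : AEStronglyMeasurable f μ) (h : ∀ x, ‖f x‖ ≤ C) : Integrable f μ :=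
  ⟨hf, HasFiniteIntegral.of_bounded (Filter.Eventually.of_forall h)⟩

lemma integral_pos_of_pos_on_open {μ : Measure X} [IsFiniteMeasure μ] {f : X → ℝ} {C : ℝ}
    (hf : Continuous f) (hbd : ∀ x, ‖f x‖ ≤ C) (hnn : 0 ≤ f)
    {O : Set X} (hO : IsOpen O) (hsub : ∀ x ∈ O, f x ≠ 0) (hpos : 0 < μ O) :
    0 < ∫ x, f x ∂μ := by
  have hint : Integrable f μ := integrable_of_bounded hf.aestronglyMeasurable hbd
  rw [integral_pos_iff_support_of_nonneg hnn hint]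
  exact lt_of_lt_of_le hpos (measure_mono fun x hx => hsub x hx)

lemma integral_le_measureReal {μ : Measure X} [IsFiniteMeasure μ] {f : X → ℝ}
    (hf : Continuous f) (hnn : 0 ≤ f) (hle : ∀ x, f x ≤ 1)
    {W : Set X} (hW : MeasurableSet W) (hsupp : ∀ x, f x ≠ 0 → x ∈ W) :
    ∫ x, f x ∂μ ≤ (μ W).toReal := by
  have hint : Integrable f μ :=
    integrable_of_bounded hf.aestronglyMeasurable
      (C := 1) (fun x => by rw [Real.norm_eq_abs, abs_of_nonneg (hnn x)]; exact hle x)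
  have hind : Integrable (W.indicator fun _ => (1 : ℝ)) μ :=
    (integrable_const (1 : ℝ)).indicator hW
  have hmono : ∀ x, f x ≤ W.indicator (fun _ => (1 : ℝ)) x := by
    intro x
    by_cases hx : x ∈ W
    · simpa [hx] using hle x
    · have : f x = 0 := by_contra fun h => hx (hsupp x h)
      simp [hx, this]
  calc ∫ x, f x ∂μ ≤ ∫ x, W.indicator (fun _ => (1 : ℝ)) x ∂μ :=
        integral_mono hint hind hmono
    _ = (μ W).toReal := by rw [integral_indicator_const _ hW]; simp [Measure.real]

end IntegralUtils

section MSupp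

variable {M : Type*} [TopologicalSpace M] [MeasurableSpace M]

lemma isClosed_mSupp (μ : Measure M) : IsClosed (mSupp μ) := by
  rw [← isOpen_compl_iff, isOpen_iff_forall_mem_open]
  intro z hz
  simp only [mSupp, mem_compl_iff, mem_setOf_eq, not_forall] at hz
  obtain ⟨O, hO, hzO, hμO⟩ := hz
  refine ⟨O, fun y hy => ?_, hO, hzO⟩
  simp only [mem_compl_iff, mSupp, mem_setOf_eq, not_forall]
  exact ⟨O, hO, hy, hμO⟩

lemma not_mem_mSupp {μ : Measure M} {z : M} (hz : z ∉ mSupp μ) :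
    ∃ O : Set M, IsOpen O ∧ z ∈ O ∧ μ O = 0 := by
  simp only [mSupp, mem_setOf_eq, not_forall] at hz
  obtain ⟨O, hO, hzO, hμO⟩ := hz
  exact ⟨O, hO, hzO, le_antisymm (not_lt.1 hμO) zero_le⟩

end MSupp

section Cone

variable {M : Type*} [MetricSpace M]

/-- A continuous "cone" bump function, `1` at `c` and vanishing outside `ball c ρ`. -/
def coneFun (c : M) (ρ : ℝ) : C(M, ℝ) :=
  ⟨fun y => max 0 (1 - dist y c / ρ), by
    apply continuous_const.max
    exact continuous_const.sub ((continuous_id.dist continuous_const).div_const ρ)⟩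

lemma coneFun_nonneg (c : M) (ρ : ℝ) (y : M) : 0 ≤ coneFun c ρ y := le_max_left _ _

lemma coneFun_le_one (c : M) {ρ : ℝ} (hρ : 0 < ρ) (y : M) : coneFun c ρ y ≤ 1 := by
  apply max_le (by norm_num)
  have : 0 ≤ dist y c / ρ := div_nonneg dist_nonneg hρ.le
  linarith

lemma coneFun_self (c : M) {ρ : ℝ} : coneFun c ρ c = max 0 (1 - 0 / ρ) := by
  simp [coneFun]

lemma coneFun_pos_self (c : M) {ρ : ℝ} (hρ : 0 < ρ) : 0 < coneFun c ρ c := by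
  rw [coneFun_self]; norm_num

lemma coneFun_ne_zero (c : M) {ρ : ℝ} (hρ : 0 < ρ) {y : M} (h : coneFun c ρ y ≠ 0) :
    y ∈ Metric.ball c ρ := by
  by_contra hy
  rw [mem_ball, not_lt] at hy
  apply h
  simp only [coneFun, ContinuousMap.coe_mk]
  rw [max_eq_left]
  have : (1 : ℝ) ≤ dist y c / ρ := (one_le_div hρ).2 hy
  linarith

lemma coneFun_pos_of_mem (c : M) {ρ : ℝ} (hρ : 0 < ρ) {y : M} (h : y ∈ Metric.ball c ρ) :
    0 < coneFun c ρ y := by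
  rw [mem_ball] at h
  have : dist y c / ρ < 1 := (div_lt_one hρ).2 h
  simp only [coneFun, ContinuousMap.coe_mk]
  rw [lt_max_iff]
  right; linarith

end Cone
section Transition

variable {M : Type*} [MetricSpace M] [CompactSpace M] [MeasurableSpace M] [BorelSpace M] {n : ℕ}

/-- The one-step transition operator applied to `φ`. -/
def transF (F : M → Par n → M) (ε : ℝ) (φ : C(M, ℝ)) : M → ℝ :=
  fun y => ∫ s, φ (F y s) ∂(ballMeasure n ε)

lemma transF_cont {F : M → Par n → M} (hFc : Continuous (Function.uncurry F))
    {ε : ℝ} (hε : 0 < ε) (φ : C(M, ℝ)) : Continuous (transF F ε φ) := by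
  haveI := ballMeasure_prob (n := n) hε
  rw [continuous_iff_continuousAt]
  intro y
  refine MeasureTheory.tendsto_integral_filter_of_dominated_convergence
    (fun _ => ‖φ‖) ?_ ?_ (integrable_const _) ?_
  · filter_upwards with y'
    exact ((φ.continuous.comp (hFc.comp (Continuous.prodMk_right y'))).aestronglyMeasurable)
  · filter_upwards with y'
    filter_upwards with s
    exact φ.norm_coe_le_norm _
  · filter_upwards with s
    exact ((φ.continuous.comp (hFc.comp (continuous_id.prodMk continuous_const))).tendsto y)

lemma transF_nonneg {F : M → Par n → M} {ε : ℝ} {φ : C(M, ℝ)} (hφ : ∀ z, 0 ≤ φ z) (y : M) :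
    0 ≤ transF F ε φ y :=
  integral_nonneg fun s => hφ _

lemma transF_bd {F : M → Par n → M} {ε : ℝ} (hε : 0 < ε) (φ : C(M, ℝ)) (y : M) :
    ‖transF F ε φ y‖ ≤ ‖φ‖ := by
  haveI := ballMeasure_prob (n := n) hε
  calc ‖transF F ε φ y‖ ≤ ‖φ‖ * ((ballMeasure n ε) univ).toReal :=
        norm_integral_le_of_norm_le_const (Filter.Eventually.of_forall fun s =>
          φ.norm_coe_le_norm _)
    _ = ‖φ‖ := by simp

lemma noise_eval0 {ε : ℝ} {ν : Measure (ℕ → Par n)} (hν : IsProductNoise ε ν) :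
    ν.map (fun t : ℕ → Par n => t 0) = ballMeasure n ε := by
  refine Measure.ext fun A hA => ?_
  rw [Measure.map_apply (measurable_pi_apply 0) hA]
  have h := hν.2 1 (fun _ => A) (fun _ => hA)
  have hset : {t : ℕ → Par n | ∀ i : Fin 1, t (i : ℕ) ∈ A}
      = (fun t : ℕ → Par n => t 0) ⁻¹' A := by
    ext t
    simp [Fin.forall_fin_one]
  rw [hset] at h
  rw [h, Fin.prod_univ_one]

lemma noise_step {F : M → Par n → M} (hFc : Continuous (Function.uncurry F))
    {ε : ℝ} (hε : 0 < ε) {ν : Measure (ℕ → Par n)} (hν : IsProductNoise ε ν)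
    (x : M) (j : ℕ) (φ : C(M, ℝ)) :
    ∫ t, φ (iterP F (j + 1) x t) ∂ν = ∫ t, transF F ε φ (iterP F j x t) ∂ν := by
  haveI := hν.1
  haveI := ballMeasure_prob (n := n) hε
  set y : (Fin j → Par n) → M := fun p => iterP F j x (extPar j p) with hy
  have hycont : Continuous y := (continuous_iterP_right F hFc j x).comp (continuous_extPar j)
  set H : (Fin j → Par n) × (ℕ → Par n) → ℝ := fun q => φ (F (y q.1) (q.2 0)) with hH
  have hHcont : Continuous H :=
    φ.continuous.comp (hFc.comp ((hycont.comp continuous_fst).prodMk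
      ((continuous_apply 0).comp continuous_snd)))
  have hHbd : ∀ q, ‖H q‖ ≤ ‖φ‖ := fun q => φ.norm_coe_le_norm _
  have step1 : ∀ t, φ (iterP F (j + 1) x t) = H (splitMap n j t) := by
    intro t
    show φ (F (iterP F j x t) (t j))
        = φ (F (iterP F j x (extPar j (fun i : Fin j => t (i : ℕ)))) (t (j + 0)))
    rw [iterP_extPar F j x t, Nat.add_zero]
  calc ∫ t, φ (iterP F (j + 1) x t) ∂ν = ∫ t, H (splitMap n j t) ∂ν := by
        simp_rw [step1]
    _ = ∫ q, H q ∂(ν.map (splitMap n j)) :=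
        (integral_map (measurable_splitMap j).aemeasurable hHcont.aestronglyMeasurable).symm
    _ = ∫ q, H q ∂((Measure.pi (fun _ : Fin j => ballMeasure n ε)).prod ν) := by
        rw [noise_map_split hν hε j]
    _ = ∫ p, (∫ u, H (p, u) ∂ν) ∂(Measure.pi (fun _ : Fin j => ballMeasure n ε)) :=
        MeasureTheory.integral_prod H (integrable_of_bounded hHcont.aestronglyMeasurable hHbd)
    _ = ∫ p, transF F ε φ (y p) ∂(Measure.pi (fun _ : Fin j => ballMeasure n ε)) := by
        refine integral_congr_ae (Filter.Eventually.of_forall fun p => ?_)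
        show ∫ u, φ (F (y p) (u 0)) ∂ν = ∫ s, φ (F (y p) s) ∂(ballMeasure n ε)
        rw [← noise_eval0 hν]
        have hg : Continuous fun s : Par n => φ (F (y p) s) :=
          φ.continuous.comp (hFc.comp (Continuous.prodMk_right (y p)))
        exact (integral_map
          ((measurable_pi_apply 0 : Measurable fun u : ℕ → Par n => u 0)).aemeasurable
          hg.aestronglyMeasurable).symm
    _ = ∫ t, transF F ε φ (y (fun i : Fin j => t (i : ℕ))) ∂ν := by
        rw [noise_map_prefix hν hε j]
        exact integral_map (measurable_prefixMap j).aemeasurable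
          (((transF_cont hFc hε φ).comp hycont).aestronglyMeasurable)
    _ = ∫ t, transF F ε φ (iterP F j x t) ∂ν := by
        refine integral_congr_ae (Filter.Eventually.of_forall fun t => ?_)
        show transF F ε φ (iterP F j x (extPar j (fun i : Fin j => t (i : ℕ))))
            = transF F ε φ (iterP F j x t)
        rw [iterP_extPar F j x t]

end Transition
section Cesaro

lemma cesaro_shift {a : ℕ → ℝ} {C L : ℝ} (hC : ∀ j, ‖a j‖ ≤ C)
    (h : Tendsto (fun N : ℕ => (N : ℝ)⁻¹ * ∑ j ∈ Finset.range N, a j) atTop (𝓝 L)) :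
    Tendsto (fun N : ℕ => (N : ℝ)⁻¹ * ∑ j ∈ Finset.range N, a (j + 1)) atTop (𝓝 L) := by
  have key : ∀ N : ℕ, (N : ℝ)⁻¹ * ∑ j ∈ Finset.range N, a (j + 1)
      = (N : ℝ)⁻¹ * ∑ j ∈ Finset.range N, a j + (N : ℝ)⁻¹ * (a N - a 0) := by
    intro N
    have := Finset.sum_range_succ' a N
    -- ∑_{j < N+1} a j = (∑_{j<N} a (j+1)) + a 0
    have hsum : ∑ j ∈ Finset.range N, a (j + 1)
        = ∑ j ∈ Finset.range N, a j + (a N - a 0) := by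
      have h2 := Finset.sum_range_succ a N
      -- h2 : ∑_{j<N+1} a j = ∑_{j<N} a j + a N
      linarith [this, h2]
    rw [hsum, mul_add]
  have hz : Tendsto (fun N : ℕ => (N : ℝ)⁻¹ * (a N - a 0)) atTop (𝓝 0) := by
    have hb : ∀ N : ℕ, ‖(N : ℝ)⁻¹ * (a N - a 0)‖ ≤ (N : ℝ)⁻¹ * (2 * C) := by
      intro N
      rw [norm_mul, norm_inv, Real.norm_natCast]
      gcongr
      calc ‖a N - a 0‖ ≤ ‖a N‖ + ‖a 0‖ := norm_sub_le _ _
          _ ≤ 2 * C := by linarith [hC N, hC 0]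
    have hg : Tendsto (fun N : ℕ => (N : ℝ)⁻¹ * (2 * C)) atTop (𝓝 0) := by
      have : Tendsto (fun N : ℕ => (N : ℝ)⁻¹) atTop (𝓝 0) :=
        tendsto_inv_atTop_zero.comp tendsto_natCast_atTop_atTop
      simpa using this.mul_const (2 * C)
    exact squeeze_zero_norm hb hg
  simp_rw [key]
  simpa using h.add hz

end Cesaro

section Stationary

variable {M : Type*} [MetricSpace M] [CompactSpace M] [MeasurableSpace M] [BorelSpace M] {n : ℕ}

lemma sojourn_limit {F : M → Par n → M} (hFc : Continuous (Function.uncurry F))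
    {ν : Measure (ℕ → Par n)} [IsProbabilityMeasure ν]
    {μ : Measure M} {x₀ : M} (hae : ∀ᵐ t ∂ν, AvgTendsto F x₀ t μ) (ψ : C(M, ℝ)) :
    Tendsto (fun N : ℕ => (N : ℝ)⁻¹ * ∑ j ∈ Finset.range N, ∫ t, ψ (iterP F j x₀ t) ∂ν)
      atTop (𝓝 (∫ y, ψ y ∂μ)) := by
  have hmeas : ∀ j : ℕ, Continuous fun t : ℕ → Par n => ψ (iterP F j x₀ t) := fun j =>
    ψ.continuous.comp (continuous_iterP_right F hFc j x₀)
  have hint : ∀ j : ℕ, Integrable (fun t : ℕ → Par n => ψ (iterP F j x₀ t)) ν := fun j =>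
    integrable_of_bounded (hmeas j).aestronglyMeasurable (fun t => ψ.norm_coe_le_norm _)
  have hG : ∀ N : ℕ, ∫ t, ((N : ℝ)⁻¹ * ∑ j ∈ Finset.range N, ψ (iterP F j x₀ t)) ∂ν
      = (N : ℝ)⁻¹ * ∑ j ∈ Finset.range N, ∫ t, ψ (iterP F j x₀ t) ∂ν := by
    intro N
    rw [MeasureTheory.integral_const_mul, MeasureTheory.integral_finset_sum _
      (fun j _ => hint j)]
  have := MeasureTheory.tendsto_integral_filter_of_dominated_convergence
    (μ := ν) (l := atTop) (F := fun N : ℕ => fun t => (N : ℝ)⁻¹ * ∑ j ∈ Finset.range N, ψ (iterP F j x₀ t))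
    (f := fun _ => ∫ y, ψ y ∂μ) (bound := fun _ => ‖ψ‖)
    ?_ ?_ (integrable_const _) ?_
  · rw [MeasureTheory.integral_const, probReal_univ, one_smul] at this
    have heq : (fun N : ℕ => ∫ t, ((N : ℝ)⁻¹ * ∑ j ∈ Finset.range N, ψ (iterP F j x₀ t)) ∂ν)
        = fun N : ℕ => (N : ℝ)⁻¹ * ∑ j ∈ Finset.range N, ∫ t, ψ (iterP F j x₀ t) ∂ν :=
      funext hG
    rwa [heq] at this
  · filter_upwards with N
    exact (continuous_const.mul
      (continuous_finset_sum _ fun j _ => hmeas j)).aestronglyMeasurable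
  · filter_upwards with N
    filter_upwards with t
    rcases Nat.eq_zero_or_pos N with hN | hN
    · simp [hN, norm_nonneg]
    · rw [norm_mul, norm_inv, Real.norm_natCast]
      calc (N : ℝ)⁻¹ * ‖∑ j ∈ Finset.range N, ψ (iterP F j x₀ t)‖
          ≤ (N : ℝ)⁻¹ * (N * ‖ψ‖) := by
            gcongr
            calc ‖∑ j ∈ Finset.range N, ψ (iterP F j x₀ t)‖
                ≤ ∑ j ∈ Finset.range N, ‖ψ (iterP F j x₀ t)‖ := norm_sum_le _ _
              _ ≤ ∑ _j ∈ Finset.range N, ‖ψ‖ :=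
                  Finset.sum_le_sum fun j _ => ψ.norm_coe_le_norm _
              _ = N * ‖ψ‖ := by simp [Finset.sum_const, Finset.card_range]
        _ = ‖ψ‖ := by
            field_simp
  · filter_upwards [hae] with t ht
    exact ht ψ

theorem noise_stationary {F : M → Par n → M} (hFc : Continuous (Function.uncurry F))
    {ε : ℝ} (hε : 0 < ε) {ν : Measure (ℕ → Par n)} (hν : IsProductNoise ε ν)
    {μ : Measure M} [IsProbabilityMeasure μ]
    {x₀ : M} (hae : ∀ᵐ t ∂ν, AvgTendsto F x₀ t μ) (φ : C(M, ℝ)) :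
    ∫ y, transF F ε φ y ∂μ = ∫ y, φ y ∂μ := by
  haveI := hν.1
  set Pφ : C(M, ℝ) := ⟨transF F ε φ, transF_cont hFc hε φ⟩ with hPφ
  set a : ℕ → ℝ := fun j => ∫ t, φ (iterP F j x₀ t) ∂ν with ha
  have hbd : ∀ j, ‖a j‖ ≤ ‖φ‖ := by
    intro j
    calc ‖a j‖ ≤ ‖φ‖ * (ν univ).toReal :=
          norm_integral_le_of_norm_le_const
            (Filter.Eventually.of_forall fun t => φ.norm_coe_le_norm _)
      _ = ‖φ‖ := by simp
  have h1 : Tendsto (fun N : ℕ => (N : ℝ)⁻¹ * ∑ j ∈ Finset.range N, a (j + 1))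
      atTop (𝓝 (∫ y, φ y ∂μ)) :=
    cesaro_shift hbd (sojourn_limit hFc hae φ)
  have h2 : Tendsto (fun N : ℕ => (N : ℝ)⁻¹ * ∑ j ∈ Finset.range N, a (j + 1))
      atTop (𝓝 (∫ y, Pφ y ∂μ)) := by
    have hstep : ∀ j : ℕ, a (j + 1) = ∫ t, Pφ (iterP F j x₀ t) ∂ν := fun j =>
      noise_step hFc hε hν x₀ j φ
    simp_rw [hstep]
    exact sojourn_limit hFc hae Pφ
  have := tendsto_nhds_unique h2 h1
  simpa [hPφ] using this

end Stationary
section Dynamics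

variable {M : Type*} [MetricSpace M] {n : ℕ}

lemma trapped_forward {F : M → Par n → M} {ε : ℝ} {U : Set M}
    (hU : ∀ s : Par n, ‖s‖ ≤ ε → (fun x => F x s) '' closure U ⊆ U)
    {t : ℕ → Par n} (ht : t ∈ Delta n ε) {x : M} {k₀ : ℕ} (h : iterP F k₀ x t ∈ U) :
    ∀ k, k₀ ≤ k → iterP F k x t ∈ U := by
  intro k hk
  induction k, hk using Nat.le_induction with
  | base => exact h
  | succ k hk ih =>
      show F (iterP F k x t) (t k) ∈ U
      exact hU (t k) (ht k) ⟨iterP F k x t, subset_closure ih, rfl⟩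

lemma approx_iter {F : M → Par n → M} {f : M → M}
    (hFc : Continuous (Function.uncurry F)) (hf0 : ∀ x, F x 0 = f x) (x : M) :
    ∀ (k : ℕ) (δ : ℝ), 0 < δ → ∃ ε₁ > 0, ∀ t : ℕ → Par n,
      (∀ j, ‖t j‖ ≤ ε₁) → dist (iterP F k x t) (f^[k] x) < δ := by
  intro k
  induction k with
  | zero =>
      intro δ hδ
      exact ⟨1, one_pos, fun t _ => by simpa [iterP] using hδ⟩
  | succ k ih =>
      intro δ hδ
      have hcont : ContinuousAt (Function.uncurry F) (f^[k] x, (0 : Par n)) :=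
        hFc.continuousAt
      rw [Metric.continuousAt_iff] at hcont
      obtain ⟨ρ, hρ, hball⟩ := hcont δ hδ
      obtain ⟨ε₁, hε₁, hε₁prop⟩ := ih (ρ / 2) (by linarith)
      refine ⟨min ε₁ (ρ / 2), lt_min hε₁ (by linarith), fun t ht => ?_⟩
      have h1 : dist (iterP F k x t) (f^[k] x) < ρ / 2 :=
        hε₁prop t fun j => (ht j).trans (min_le_left _ _)
      have h2 : dist ((iterP F k x t, t k) : M × Par n) (f^[k] x, (0 : Par n)) < ρ := by
        rw [Prod.dist_eq]
        apply max_lt (by linarith)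
        rw [dist_zero_right]
        exact lt_of_le_of_lt ((ht k).trans (min_le_right _ _)) (by linarith)
      have h3 := hball h2
      have : Function.uncurry F (f^[k] x, (0 : Par n)) = f^[k + 1] x := by
        rw [Function.uncurry_apply_pair, hf0, Function.iterate_succ_apply']
      rw [this] at h3
      exact h3

lemma basin_enter {f : M → M} {Λ U : Set M} (hΛne : Λ.Nonempty) (hΛc : IsCompact Λ)
    (hUo : IsOpen U) (hΛU : Λ ⊆ U) {x : M} (hx : x ∈ basinAttr f Λ) :
    ∃ (k₀ : ℕ) (δ : ℝ), 0 < δ ∧ ∀ y, dist y (f^[k₀] x) < δ → y ∈ U := by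
  obtain ⟨δ', hδ', hthick⟩ := hΛc.exists_thickening_subset_open hUo hΛU
  have hev : ∀ᶠ k in atTop, infDist (f^[k] x) Λ < δ' / 2 :=
    hx.eventually (gt_mem_nhds (by linarith))
  obtain ⟨k₀, hk₀⟩ := hev.exists
  refine ⟨k₀, δ' / 2, by linarith, fun y hy => ?_⟩
  apply hthick
  rw [Metric.mem_thickening_iff_infDist_lt hΛne]
  calc infDist y Λ ≤ infDist (f^[k₀] x) Λ + dist y (f^[k₀] x) :=
        Metric.infDist_le_infDist_add_dist
    _ < δ' / 2 + δ' / 2 := add_lt_add hk₀ hy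
    _ = δ' := by ring

lemma basin_disjoint {f : M → M} {Λ₁ Λ₂ : Set M} (h1 : IsCompact Λ₁) (h2 : IsCompact Λ₂)
    (hne1 : Λ₁.Nonempty) (hne2 : Λ₂.Nonempty) (hd : Disjoint Λ₁ Λ₂) :
    Disjoint (basinAttr f Λ₁) (basinAttr f Λ₂) := by
  rw [Set.disjoint_left]
  intro x hx1 hx2
  obtain ⟨δ, hδ, hdisj⟩ := hd.exists_thickenings h1 h2.isClosed
  have hev1 : ∀ᶠ k in atTop, infDist (f^[k] x) Λ₁ < δ := hx1.eventually (gt_mem_nhds hδ)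
  have hev2 : ∀ᶠ k in atTop, infDist (f^[k] x) Λ₂ < δ := hx2.eventually (gt_mem_nhds hδ)
  obtain ⟨k, h1', h2'⟩ := (hev1.and hev2).exists
  exact Set.disjoint_left.1 hdisj
    ((Metric.mem_thickening_iff_infDist_lt hne1).2 h1')
    ((Metric.mem_thickening_iff_infDist_lt hne2).2 h2')

lemma measurable_basinAttr [MeasurableSpace M] [BorelSpace M] {f : M → M}
    (hfc : Continuous f) (Λ : Set M) : MeasurableSet (basinAttr f Λ) := by
  have heq : basinAttr f Λ =
      ⋂ (q : ℚ), ⋂ (_ : 0 < q), ⋃ (N : ℕ), ⋂ (k : ℕ), ⋂ (_ : N ≤ k),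
        {x : M | infDist (f^[k] x) Λ < (q : ℝ)} := by
    ext x
    simp only [basinAttr, mem_setOf_eq, mem_iInter, mem_iUnion]
    constructor
    · intro h q hq
      rw [Metric.tendsto_atTop] at h
      obtain ⟨N, hN⟩ := h (q : ℝ) (by exact_mod_cast hq)
      refine ⟨N, fun k hk => ?_⟩
      have := hN k hk
      rwa [dist_zero_right, Real.norm_eq_abs, abs_of_nonneg Metric.infDist_nonneg] at this
    · intro h
      rw [Metric.tendsto_atTop]
      intro εr hεr
      obtain ⟨q, hq0, hqε⟩ := exists_rat_btwn hεr
      have hq0' : 0 < q := by exact_mod_cast hq0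
      obtain ⟨N, hN⟩ := h q hq0'
      refine ⟨N, fun k hk => ?_⟩
      rw [dist_zero_right, Real.norm_eq_abs, abs_of_nonneg Metric.infDist_nonneg]
      exact lt_trans (hN k hk) hqε
  rw [heq]
  refine MeasurableSet.iInter fun q => MeasurableSet.iInter fun _ =>
    MeasurableSet.iUnion fun N => MeasurableSet.iInter fun k => MeasurableSet.iInter fun _ => ?_
  have : Continuous fun x : M => infDist (f^[k] x) Λ :=
    (Metric.continuous_infDist_pt Λ).comp (hfc.iterate k)
  exact (isOpen_lt this continuous_const).measurableSet

end Dynamics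
section Support

variable {M : Type*} [MetricSpace M] [CompactSpace M] [MeasurableSpace M] [BorelSpace M] {n : ℕ}

theorem mSupp_forward_invariant {F : M → Par n → M} (hFc : Continuous (Function.uncurry F))
    {ε : ℝ} (hε : 0 < ε) {ν : Measure (ℕ → Par n)} (hν : IsProductNoise ε ν)
    {μ : Measure M} [IsProbabilityMeasure μ]
    {x₀ : M} (hae : ∀ᵐ t ∂ν, AvgTendsto F x₀ t μ) :
    ∀ y ∈ mSupp μ, ∀ s : Par n, ‖s‖ ≤ ε → F y s ∈ mSupp μ := by
  haveI := ballMeasure_prob (n := n) hε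
  intro y hy s hs W hW hFW
  obtain ⟨ρ, hρ, hballW⟩ := Metric.isOpen_iff.1 hW _ hFW
  set φ : C(M, ℝ) := coneFun (F y s) ρ with hφ
  -- `transF F ε φ y > 0`
  have hPy : 0 < transF F ε φ y := by
    refine integral_pos_of_pos_on_open (C := ‖φ‖)
      (φ.continuous.comp (hFc.comp (Continuous.prodMk_right y)))
      (fun u => φ.norm_coe_le_norm _) (fun u => coneFun_nonneg _ _ _)
      (O := (fun u => F y u) ⁻¹' Metric.ball (F y s) ρ)
      (hO := ?_) (hsub := ?_) (hpos := ?_)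
    · exact IsOpen.preimage (hFc.comp (Continuous.prodMk_right y)) Metric.isOpen_ball
    · intro u hu
      exact ne_of_gt (coneFun_pos_of_mem _ hρ hu)
    · refine ballMeasure_pos_of_open hε
        (IsOpen.preimage (hFc.comp (Continuous.prodMk_right y)) Metric.isOpen_ball) ?_ hs
      show F y s ∈ Metric.ball (F y s) ρ
      simp [hρ]
  -- `∫ transF φ dμ > 0`
  have hPint : 0 < ∫ z, transF F ε φ z ∂μ := by
    refine integral_pos_of_pos_on_open (C := ‖φ‖) (transF_cont hFc hε φ)
      (transF_bd hε φ) (fun z => transF_nonneg (fun w => coneFun_nonneg _ _ _) z)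
      (hO := ?_) (hsub := ?_) (hpos := ?_) (O := (transF F ε φ) ⁻¹' (Ioi (transF F ε φ y / 2)))
    · exact IsOpen.preimage (transF_cont hFc hε φ) isOpen_Ioi
    · intro z hz
      have : transF F ε φ y / 2 < transF F ε φ z := hz
      have h2 : 0 < transF F ε φ y / 2 := by linarith
      exact ne_of_gt (lt_trans h2 this)
    · exact hy _ (IsOpen.preimage (transF_cont hFc hε φ) isOpen_Ioi)
        (by simpa using by linarith : y ∈ (transF F ε φ) ⁻¹' (Ioi (transF F ε φ y / 2)))
  have hstat := noise_stationary hFc hε hν hae φ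
  have hupper : ∫ z, φ z ∂μ ≤ (μ W).toReal := by
    refine integral_le_measureReal φ.continuous (fun z => coneFun_nonneg _ _ _)
      (fun z => coneFun_le_one _ hρ _) hW.measurableSet (fun z hz => ?_)
    exact hballW (coneFun_ne_zero _ hρ hz)
  have : 0 < (μ W).toReal := by
    rw [← hstat] at hupper
    linarith
  by_contra hcon
  rw [not_lt, le_zero_iff] at hcon
  rw [hcon] at this
  simp at this

lemma orbit_mem_mSupp {F : M → Par n → M} {ε : ℝ} {μ : Measure M}
    (hinv : ∀ y ∈ mSupp μ, ∀ s : Par n, ‖s‖ ≤ ε → F y s ∈ mSupp μ)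
    {z : M} (hz : z ∈ mSupp μ) {t : ℕ → Par n} (ht : t ∈ Delta n ε) (k : ℕ) :
    iterP F k z t ∈ mSupp μ := by
  induction k with
  | zero => exact hz
  | succ k ih => exact hinv _ ih (t k) (ht k)

lemma hits_of_avgTendsto {F : M → Par n → M} {μ : Measure M} [IsProbabilityMeasure μ]
    {c : M} (hc : c ∈ mSupp μ) {ξ : ℝ} (hξ : 0 < ξ)
    (hsub : Metric.ball c ξ ⊆ mSupp μ) {y : M} {t : ℕ → Par n}
    (h : AvgTendsto F y t μ) : ∃ k : ℕ, 1 ≤ k ∧ iterP F k y t ∈ mSupp μ := by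
  set φ : C(M, ℝ) := coneFun c ξ with hφ
  have hint : 0 < ∫ z, φ z ∂μ := by
    refine integral_pos_of_pos_on_open (C := ‖φ‖) φ.continuous
      (fun z => φ.norm_coe_le_norm _) (fun z => coneFun_nonneg _ _ _)
      (O := Metric.ball c ξ) (hO := Metric.isOpen_ball) (hsub := ?_) (hpos := ?_)
    · intro z hz
      exact ne_of_gt (coneFun_pos_of_mem _ hξ hz)
    · exact hc _ Metric.isOpen_ball (Metric.mem_ball_self hξ)
  by_contra hcon
  push_neg at hcon
  have hzero : ∀ k : ℕ, 1 ≤ k → φ (iterP F k y t) = 0 := by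
    intro k hk
    by_contra hne
    exact hcon k hk (hsub (coneFun_ne_zero _ hξ hne))
  have hsum : ∀ N : ℕ, ∑ j ∈ Finset.range N, φ (iterP F j y t)
      = if 0 < N then φ y else 0 := by
    intro N
    rcases Nat.eq_zero_or_pos N with hN | hN
    · simp [hN]
    · rw [if_pos hN]
      rw [Finset.sum_eq_single 0]
      · rfl
      · intro j hj hj0
        exact hzero j (Nat.one_le_iff_ne_zero.2 hj0)
      · intro h0
        exact absurd (Finset.mem_range.2 hN) h0
  have hlim : Tendsto (fun N : ℕ => (N : ℝ)⁻¹ * ∑ j ∈ Finset.range N, φ (iterP F j y t))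
      atTop (𝓝 0) := by
    have h1 : ∀ N : ℕ, 1 ≤ N →
        (N : ℝ)⁻¹ * ∑ j ∈ Finset.range N, φ (iterP F j y t) = (N : ℝ)⁻¹ * φ y := by
      intro N hN
      rw [hsum N, if_pos (by omega)]
    have h2 : Tendsto (fun N : ℕ => (N : ℝ)⁻¹ * φ y) atTop (𝓝 0) := by
      have : Tendsto (fun N : ℕ => (N : ℝ)⁻¹) atTop (𝓝 0) :=
        tendsto_inv_atTop_zero.comp tendsto_natCast_atTop_atTop
      simpa using this.mul_const (φ y)
    apply h2.congr'
    filter_upwards [eventually_ge_atTop 1] with N hN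
    exact (h1 N hN).symm
  have := tendsto_nhds_unique (h φ) hlim
  rw [this] at hint
  exact lt_irrefl 0 hint

end Support
section HitSets

variable {M : Type*} [MetricSpace M] [MeasurableSpace M] [BorelSpace M] {n : ℕ}

lemma measurable_hitSet {F : M → Par n → M} (hFc : Continuous (Function.uncurry F))
    {S : Set M} (hS : IsClosed S) :
    MeasurableSet {p : M × (ℕ → Par n) | ∃ k : ℕ, 1 ≤ k ∧ iterP F k p.1 p.2 ∈ S} := by
  have heq : {p : M × (ℕ → Par n) | ∃ k : ℕ, 1 ≤ k ∧ iterP F k p.1 p.2 ∈ S}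
      = ⋃ k : ℕ, {p : M × (ℕ → Par n) | iterP F (k + 1) p.1 p.2 ∈ S} := by
    ext p
    simp only [mem_setOf_eq, mem_iUnion]
    constructor
    · rintro ⟨k, hk, h⟩
      exact ⟨k - 1, by rwa [Nat.sub_add_cancel hk]⟩
    · rintro ⟨k, h⟩
      exact ⟨k + 1, Nat.succ_le_succ (Nat.zero_le k), h⟩
  rw [heq]
  exact MeasurableSet.iUnion fun k =>
    (continuous_iterP F hFc (k + 1)).measurable hS.measurableSet

lemma measurable_hitSet_fixed {F : M → Par n → M} (hFc : Continuous (Function.uncurry F))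
    {S : Set M} (hS : IsClosed S) (x : M) :
    MeasurableSet {t : ℕ → Par n | ∃ k : ℕ, 1 ≤ k ∧ iterP F k x t ∈ S} := by
  have : {t : ℕ → Par n | ∃ k : ℕ, 1 ≤ k ∧ iterP F k x t ∈ S}
      = Prod.mk x ⁻¹' {p : M × (ℕ → Par n) | ∃ k : ℕ, 1 ≤ k ∧ iterP F k p.1 p.2 ∈ S} := rfl
  rw [this]
  exact (measurable_prodMk_left (measurable_hitSet hFc hS))

lemma measurable_badPair {F : M → Par n → M} (hFc : Continuous (Function.uncurry F))
    {S : Set M} (hS : IsClosed S) (x : M) (k₀ : ℕ) (ε : ℝ) :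
    MeasurableSet {q : (Fin k₀ → Par n) × (ℕ → Par n) |
      (∀ l : Fin k₀, ‖q.1 l‖ ≤ ε) ∧
      ¬ ∃ k : ℕ, 1 ≤ k ∧ iterP F k (iterP F k₀ x (extPar k₀ q.1)) q.2 ∈ S} := by
  have h1 : MeasurableSet {q : (Fin k₀ → Par n) × (ℕ → Par n) | ∀ l : Fin k₀, ‖q.1 l‖ ≤ ε} := by
    have : {q : (Fin k₀ → Par n) × (ℕ → Par n) | ∀ l : Fin k₀, ‖q.1 l‖ ≤ ε}
        = ⋂ l : Fin k₀, {q : (Fin k₀ → Par n) × (ℕ → Par n) | ‖q.1 l‖ ≤ ε} := by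
      ext q; simp
    rw [this]
    refine MeasurableSet.iInter fun l => ?_
    exact (isClosed_le (continuous_norm.comp ((continuous_apply l).comp continuous_fst))
      continuous_const).measurableSet
  have h2 : MeasurableSet {q : (Fin k₀ → Par n) × (ℕ → Par n) |
      ∃ k : ℕ, 1 ≤ k ∧ iterP F k (iterP F k₀ x (extPar k₀ q.1)) q.2 ∈ S} := by
    have : {q : (Fin k₀ → Par n) × (ℕ → Par n) |
        ∃ k : ℕ, 1 ≤ k ∧ iterP F k (iterP F k₀ x (extPar k₀ q.1)) q.2 ∈ S}
        = (fun q : (Fin k₀ → Par n) × (ℕ → Par n) =>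
            ((iterP F k₀ x (extPar k₀ q.1), q.2) : M × (ℕ → Par n))) ⁻¹'
          {p : M × (ℕ → Par n) | ∃ k : ℕ, 1 ≤ k ∧ iterP F k p.1 p.2 ∈ S} := rfl
    rw [this]
    have hcont : Continuous (fun q : (Fin k₀ → Par n) × (ℕ → Par n) =>
        ((iterP F k₀ x (extPar k₀ q.1), q.2) : M × (ℕ → Par n))) :=
      (((continuous_iterP_right F hFc k₀ x).comp (continuous_extPar k₀)).comp
        continuous_fst).prodMk continuous_snd
    exact hcont.measurable (measurable_hitSet hFc hS)
  exact h1.inter h2.compl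

end HitSets
section KeyLemmas

variable {M : Type*} [MetricSpace M] [CompactSpace M] [MeasurableSpace M] [BorelSpace M] {n : ℕ}

lemma delta_compl_null {ε : ℝ} {ν : Measure (ℕ → Par n)}
    (hν : IsProductNoise ε ν) (hε : 0 < ε) : ν (Delta n ε)ᶜ = 0 := by
  have := noise_ae_mem_Delta hν hε
  rwa [ae_iff] at this

theorem hit_prob_one {F : M → Par n → M} (hFc : Continuous (Function.uncurry F))
    {f : M → M}
    {ε : ℝ} (hε : 0 < ε) {ν : Measure (ℕ → Par n)} (hν : IsProductNoise ε ν)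
    {μ : Measure M} [IsProbabilityMeasure μ] {UU : Set M}
    (hae : ∀ x ∈ UU, ∀ᵐ t ∂ν, AvgTendsto F x t μ)
    {z : M} (hzU : z ∈ UU) (hzsupp : z ∈ mSupp μ)
    {Kε : ℕ} {ξε : ℝ} (hξ : 0 < ξε)
    (hcover : Metric.ball (f^[Kε] z) ξε ⊆ (fun t => iterP F Kε z t) '' Delta n ε)
    (hcsupp : f^[Kε] z ∈ mSupp μ)
    {x : M} {k₀ : ℕ}
    (hentry : ∀ p : Fin k₀ → Par n, (∀ l, ‖p l‖ ≤ ε) → iterP F k₀ x (extPar k₀ p) ∈ UU) :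
    ν {t : ℕ → Par n | ∃ k : ℕ, 1 ≤ k ∧ iterP F k x t ∈ mSupp μ} = 1 := by
  haveI := hν.1
  have hinv := mSupp_forward_invariant hFc hε hν (hae z hzU)
  have hball : Metric.ball (f^[Kε] z) ξε ⊆ mSupp μ := by
    rintro y hy
    obtain ⟨t', ht', rfl⟩ := hcover hy
    exact orbit_mem_mSupp hinv hzsupp ht' Kε
  have hSclosed : IsClosed (mSupp μ) := isClosed_mSupp μ
  have hHitm := measurable_hitSet_fixed hFc hSclosed x
  rw [← prob_compl_eq_zero_iff hHitm]
  set BadPair : Set ((Fin k₀ → Par n) × (ℕ → Par n)) :=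
    {q | (∀ l : Fin k₀, ‖q.1 l‖ ≤ ε) ∧
      ¬ ∃ k : ℕ, 1 ≤ k ∧ iterP F k (iterP F k₀ x (extPar k₀ q.1)) q.2 ∈ mSupp μ} with hBP
  have hBPm : MeasurableSet BadPair := measurable_badPair hFc hSclosed x k₀ ε
  have hsubset : {t : ℕ → Par n | ∃ k : ℕ, 1 ≤ k ∧ iterP F k x t ∈ mSupp μ}ᶜ
      ⊆ (Delta n ε)ᶜ ∪ (splitMap n k₀ ⁻¹' BadPair) := by
    intro t ht
    by_cases hΔ : t ∈ Delta n ε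
    · right
      rw [mem_preimage, hBP]
      refine ⟨fun l => hΔ l, ?_⟩
      rintro ⟨k, hk, hmem⟩
      apply ht
      refine ⟨k₀ + k, by omega, ?_⟩
      rw [iterP_add]
      show iterP F k (iterP F k₀ x t) ((splitMap n k₀ t).2) ∈ mSupp μ
      rw [← iterP_extPar F k₀ x t]
      exact hmem
    · left; exact hΔ
  have hmapBP : ν (splitMap n k₀ ⁻¹' BadPair) = 0 := by
    rw [← Measure.map_apply (measurable_splitMap k₀) hBPm, ← noise_map_split hν hε k₀,
      Measure.prod_apply hBPm]
    have hzero : ∀ p : Fin k₀ → Par n, ν (Prod.mk p ⁻¹' BadPair) = 0 := by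
      intro p
      by_cases hp : ∀ l : Fin k₀, ‖p l‖ ≤ ε
      · have hae' := hae _ (hentry p hp)
        rw [ae_iff] at hae'
        refine measure_mono_null (fun u hu => ?_) hae'
        rw [mem_preimage, hBP, mem_setOf_eq] at hu
        rw [mem_setOf_eq]
        intro hAvg
        exact hu.2 (hits_of_avgTendsto hcsupp hξ hball hAvg)
      · have hempty : Prod.mk p ⁻¹' BadPair = ∅ := by
          rw [eq_empty_iff_forall_notMem]
          intro u hu
          rw [mem_preimage, hBP, mem_setOf_eq] at hu
          exact hp hu.1
        rw [hempty, measure_empty]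
    simp only [hzero]
    exact MeasureTheory.lintegral_zero
  refine le_antisymm ?_ zero_le
  calc ν {t : ℕ → Par n | ∃ k : ℕ, 1 ≤ k ∧ iterP F k x t ∈ mSupp μ}ᶜ
      ≤ ν ((Delta n ε)ᶜ ∪ (splitMap n k₀ ⁻¹' BadPair)) := measure_mono hsubset
    _ ≤ ν (Delta n ε)ᶜ + ν (splitMap n k₀ ⁻¹' BadPair) := measure_union_le _ _
    _ = 0 := by rw [delta_compl_null hν hε, hmapBP, add_zero]

theorem hit_prob_zero {F : M → Par n → M}
    {ε : ℝ} (hε : 0 < ε) {ν : Measure (ℕ → Par n)} (hν : IsProductNoise ε ν)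
    {Si Ui Uj : Set M} (hSi : Si ⊆ Ui)
    (hUi : ∀ s : Par n, ‖s‖ ≤ ε → (fun x => F x s) '' closure Ui ⊆ Ui)
    (hUj : ∀ s : Par n, ‖s‖ ≤ ε → (fun x => F x s) '' closure Uj ⊆ Uj)
    (hdisjU : Disjoint Ui Uj)
    {x : M} {k₀ : ℕ} (hentry : ∀ t ∈ Delta n ε, iterP F k₀ x t ∈ Uj) :
    ν {t : ℕ → Par n | ∃ k : ℕ, 1 ≤ k ∧ iterP F k x t ∈ Si} = 0 := by
  refine measure_mono_null (fun t ht => ?_) (delta_compl_null hν hε)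
  rw [mem_setOf_eq] at ht
  obtain ⟨k, hk, hmem⟩ := ht
  rw [mem_compl_iff]
  intro hΔ
  have h1 : iterP F (max k k₀) x t ∈ Ui :=
    trapped_forward hUi hΔ (hSi hmem) _ (le_max_left _ _)
  have h2 : iterP F (max k k₀) x t ∈ Uj :=
    trapped_forward hUj hΔ (hentry t hΔ) _ (le_max_right _ _)
  exact Set.disjoint_left.1 hdisjU h1 h2

end KeyLemmas
/-- **Limits of the weights.** For finitely many pairwise disjoint attractors satisfying
Conditions A and B, with `α_i^ε(x) = ν_ε^∞ {t̲ : ∃ k ≥ 1, f^k(x,t̲) ∈ supp μ_i^ε}` and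
`β_i^ε = ∫ α_i^ε dm`, one has `β_i^ε → m(W^s(Λ_i))` as `ε → 0⁺` for each `i`. -/
theorem weights_limit
    {d n : ℕ} {M : Type*} [MetricSpace M] [CompactSpace M]
    [ChartedSpace (EuclideanSpace ℝ (Fin d)) M] [IsManifold (𝓡 d) (⊤ : ℕ∞) M]
    [MeasurableSpace M] [BorelSpace M]
    (f : M → M) (m : Measure M) [IsProbabilityMeasure m] [m.IsOpenPosMeasure]
    (F : M → Par n → M) (ν : ℝ → Measure (ℕ → Par n))
    (K : ℝ → ℕ) (ξ : ℝ → ℝ) (ε₀ : ℝ)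
    (hF : IsPhysPert d f m F ν K ξ ε₀)
    {N : ℕ} (Λ : Fin N → Set M)
    (hdisj : ∀ i j, i ≠ j → Disjoint (Λ i) (Λ j))
    (hattr : ∀ i, IsAttractor f (Λ i))
    (hA : m ((⋃ i, basinAttr f (Λ i))ᶜ) = 0)
    (U : Fin N → Set M) (εthr : Fin N → ℝ) (με : Fin N → ℝ → Measure M)
    (μlim : Fin N → Measure M)
    (hloc : ∀ i, IsLocalizedPhysFamily F ν (Λ i) (U i) (εthr i) (με i))
    (hB : ∀ i, IsStochasticallyStable f (Λ i) (μlim i) (με i)) :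
    ∀ i : Fin N,
      Tendsto
        (fun ε => ∫ x,
          ((ν ε) {t : ℕ → Par n |
            ∃ k : ℕ, 1 ≤ k ∧ iterP F k x t ∈ mSupp (με i ε)}).toReal ∂m)
        (𝓝[>] (0 : ℝ)) (𝓝 ((m (basinAttr f (Λ i))).toReal)) := by
  intro i
  have hFc : Continuous (Function.uncurry F) := hF.smooth.continuous
  have hfeq : f = fun x => F x 0 := funext fun x => (hF.base x).symm
  have hfc : Continuous f := by
    rw [hfeq]; exact hFc.comp (continuous_id.prodMk continuous_const)
  have hε₀ : 0 < ε₀ := hF.eps0_mem.1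
  have hΛne : ∀ j, (Λ j).Nonempty := fun j => by
    obtain ⟨z, hz, -⟩ := (hattr j).transitive; exact ⟨z, hz⟩
  have hΛc : ∀ j, IsCompact (Λ j) := fun j => (hattr j).compact
  have hthr : ∀ j, 0 < εthr j := fun j => (hloc j).1
  have hUo : ∀ j, IsOpen (U j) := fun j => (hloc j).2.1
  have hΛU : ∀ j, Λ j ⊆ U j := fun j => (hloc j).2.2.1
  have hlocp := fun j => (hloc j).2.2.2
  have hforb : ∀ j (z : M), z ∈ Λ j → ∀ k, f^[k] z ∈ Λ j := by
    intro j z hz k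
    induction k with
    | zero => simpa using hz
    | succ k ih =>
        rw [Function.iterate_succ_apply', ← (hattr j).invariant]
        exact mem_image_of_mem f ih
  -- Step A : the neighborhoods `U j` are pairwise disjoint
  have hUdisj : ∀ j l, j ≠ l → Disjoint (U j) (U l) := by
    intro j l hjl
    rw [Set.disjoint_left]
    intro a haj hal
    set m₀ := min ε₀ (min (εthr j) (εthr l)) with hm₀
    have hm₀pos : 0 < m₀ := lt_min hε₀ (lt_min (hthr j) (hthr l))
    have hkey : ∀ ε' ∈ Ioo (0:ℝ) m₀,
        ∀ φ : C(M,ℝ), ∫ y, φ y ∂(με j ε') = ∫ y, φ y ∂(με l ε') := by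
      intro ε' hε'
      have hε'j : ε' ∈ Ioo 0 (εthr j) :=
        ⟨hε'.1, hε'.2.trans_le ((min_le_right _ _).trans (min_le_left _ _))⟩
      have hε'l : ε' ∈ Ioo 0 (εthr l) :=
        ⟨hε'.1, hε'.2.trans_le ((min_le_right _ _).trans (min_le_right _ _))⟩
      have hε'0 : ε' ∈ Ioo (0:ℝ) ε₀ := ⟨hε'.1, hε'.2.trans_le (min_le_left _ _)⟩
      haveI := (hF.noise ε' hε'0).1
      haveI : (ae (ν ε')).NeBot := ae_neBot.2 (IsProbabilityMeasure.ne_zero (ν ε'))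
      have haj' := ((hlocp j) ε' hε'j).2.2.2.2 a haj
      have hal' := ((hlocp l) ε' hε'l).2.2.2.2 a hal
      obtain ⟨t, htj, htl⟩ := (haj'.and hal').exists
      intro φ
      exact tendsto_nhds_unique (htj φ) (htl φ)
    have hlimeq : ∀ φ : C(M,ℝ), ∫ y, φ y ∂(μlim j) = ∫ y, φ y ∂(μlim l) := by
      intro φ
      have h1 := (hB j).2.2.2 φ
      have h2 := (hB l).2.2.2 φ
      have hev : (fun ε' => ∫ y, φ y ∂(με j ε'))
          =ᶠ[𝓝[>] (0:ℝ)] fun ε' => ∫ y, φ y ∂(με l ε') := by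
        filter_upwards [Ioo_mem_nhdsGT_of_mem ⟨le_refl (0:ℝ), hm₀pos⟩] with ε' hε'
        exact hkey ε' hε' φ
      exact tendsto_nhds_unique (h1.congr' hev) h2
    obtain ⟨z, hzΛ⟩ := hΛne j
    have hzsupp : z ∈ mSupp (μlim j) := by rw [(hB j).2.2.1]; exact hzΛ
    have hznot : z ∉ mSupp (μlim l) := by
      rw [(hB l).2.2.1]
      exact Set.disjoint_left.1 (hdisj j l hjl) hzΛ
    obtain ⟨O, hOo, hzO, hO0⟩ := not_mem_mSupp hznot
    obtain ⟨ρ, hρ, hballO⟩ := Metric.isOpen_iff.1 hOo z hzO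
    haveI := (hB j).1
    haveI := (hB l).1
    have hpos : 0 < ∫ y, (coneFun z ρ) y ∂(μlim j) :=
      integral_pos_of_pos_on_open (C := ‖coneFun z ρ‖) (coneFun z ρ).continuous
        (fun y => (coneFun z ρ).norm_coe_le_norm _) (fun y => coneFun_nonneg _ _ _)
        (O := Metric.ball z ρ) (hO := Metric.isOpen_ball)
        (fun y hy => ne_of_gt (coneFun_pos_of_mem _ hρ hy))
        (hzsupp _ Metric.isOpen_ball (Metric.mem_ball_self hρ))
    have hle : ∫ y, (coneFun z ρ) y ∂(μlim l) ≤ (μlim l O).toReal :=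
      integral_le_measureReal (coneFun z ρ).continuous (fun y => coneFun_nonneg _ _ _)
        (fun y => coneFun_le_one _ hρ _) hOo.measurableSet
        (fun y hy => hballO (coneFun_ne_zero _ hρ hy))
    rw [hO0] at hle
    simp only [ENNReal.toReal_zero] at hle
    rw [hlimeq (coneFun z ρ)] at hpos
    linarith
  -- pointwise limits
  have hptwise : ∀ᵐ x ∂m, Tendsto
      (fun ε => ((ν ε) {t : ℕ → Par n |
        ∃ k : ℕ, 1 ≤ k ∧ iterP F k x t ∈ mSupp (με i ε)}).toReal)
      (𝓝[>] (0:ℝ)) (𝓝 ((basinAttr f (Λ i)).indicator (fun _ => (1:ℝ)) x)) := by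
    have hcov : {x : M | ¬ x ∈ ⋃ j, basinAttr f (Λ j)} = (⋃ j, basinAttr f (Λ j))ᶜ := rfl
    have hcover_ae : ∀ᵐ x ∂m, x ∈ ⋃ j, basinAttr f (Λ j) := by
      rw [ae_iff, hcov]; exact hA
    filter_upwards [hcover_ae] with x hx
    obtain ⟨j, hxj⟩ := mem_iUnion.1 hx
    by_cases hij : j = i
    · subst hij
      obtain ⟨k₀, δ, hδ, hUenter⟩ := basin_enter (hΛne j) (hΛc j) (hUo j) (hΛU j) hxj
      obtain ⟨ε₁, hε₁, happrox⟩ := approx_iter hFc hF.base x k₀ δ hδ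
      set εx := min ε₁ (min ε₀ (εthr j)) with hεxdef
      have hεx : 0 < εx := lt_min hε₁ (lt_min hε₀ (hthr j))
      have hone : ∀ ε ∈ Ioo (0:ℝ) εx,
          ((ν ε) {t : ℕ → Par n |
            ∃ k : ℕ, 1 ≤ k ∧ iterP F k x t ∈ mSupp (με j ε)}).toReal = 1 := by
        intro ε hε
        have hε0 : ε ∈ Ioo (0:ℝ) ε₀ :=
          ⟨hε.1, hε.2.trans_le ((min_le_right _ _).trans (min_le_left _ _))⟩
        have hεthr : ε ∈ Ioo (0:ℝ) (εthr j) :=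
          ⟨hε.1, hε.2.trans_le ((min_le_right _ _).trans (min_le_right _ _))⟩
        have hεε₁ : ε ≤ ε₁ := (hε.2.trans_le (min_le_left _ _)).le
        have hprop := (hlocp j) ε hεthr
        haveI := hprop.1
        have hν := hF.noise ε hε0
        haveI := hν.1
        obtain ⟨z, hzΛ, -⟩ := (hattr j).transitive
        have hzU : z ∈ U j := hΛU j hzΛ
        have hzsupp : z ∈ mSupp (με j ε) := hprop.2.1 hzΛ
        have hcsupp : f^[K ε] z ∈ mSupp (με j ε) := hprop.2.1 (hforb j z hzΛ (K ε))
        have hξ := hF.xi_pos ε hε0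
        have hcover := hF.cover ε hε0 z (K ε) le_rfl
        have hentry : ∀ p : Fin k₀ → Par n, (∀ l, ‖p l‖ ≤ ε) →
            iterP F k₀ x (extPar k₀ p) ∈ U j := by
          intro p hp
          apply hUenter
          apply happrox
          intro j'
          by_cases hj' : j' < k₀
          · rw [extPar_agree p j' hj']; exact (hp _).trans hεε₁
          · simp only [extPar, hj', dif_neg, not_false_iff]
            simpa using hε₁.le
        have hres := hit_prob_one hFc hε.1 hν (fun y hy => hprop.2.2.2.2 y hy)
          hzU hzsupp hξ hcover hcsupp hentry
        rw [hres, ENNReal.toReal_one]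
      have hgx : (basinAttr f (Λ j)).indicator (fun _ => (1:ℝ)) x = 1 :=
        indicator_of_mem hxj _
      rw [hgx]
      apply Tendsto.congr' _ tendsto_const_nhds
      filter_upwards [Ioo_mem_nhdsGT_of_mem ⟨le_refl (0:ℝ), hεx⟩] with ε hε
      exact (hone ε hε).symm
    · obtain ⟨k₀, δ, hδ, hUenter⟩ := basin_enter (hΛne j) (hΛc j) (hUo j) (hΛU j) hxj
      obtain ⟨ε₁, hε₁, happrox⟩ := approx_iter hFc hF.base x k₀ δ hδ
      set εx := min ε₁ (min ε₀ (min (εthr i) (εthr j))) with hεxdef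
      have hεx : 0 < εx := lt_min hε₁ (lt_min hε₀ (lt_min (hthr i) (hthr j)))
      have hzero : ∀ ε ∈ Ioo (0:ℝ) εx,
          ((ν ε) {t : ℕ → Par n |
            ∃ k : ℕ, 1 ≤ k ∧ iterP F k x t ∈ mSupp (με i ε)}).toReal = 0 := by
        intro ε hε
        have hε0 : ε ∈ Ioo (0:ℝ) ε₀ :=
          ⟨hε.1, hε.2.trans_le ((min_le_right _ _).trans (min_le_left _ _))⟩
        have hεi : ε ∈ Ioo (0:ℝ) (εthr i) :=
          ⟨hε.1, hε.2.trans_le (((min_le_right _ _).trans (min_le_right _ _)).trans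
            (min_le_left _ _))⟩
        have hεj : ε ∈ Ioo (0:ℝ) (εthr j) :=
          ⟨hε.1, hε.2.trans_le (((min_le_right _ _).trans (min_le_right _ _)).trans
            (min_le_right _ _))⟩
        have hεε₁ : ε ≤ ε₁ := (hε.2.trans_le (min_le_left _ _)).le
        have hpropi := (hlocp i) ε hεi
        have hpropj := (hlocp j) ε hεj
        have hν := hF.noise ε hε0
        have hentry : ∀ t ∈ Delta n ε, iterP F k₀ x t ∈ U j := fun t ht =>
          hUenter _ (happrox t (fun j' => (ht j').trans hεε₁))
        have hres := hit_prob_zero hε.1 hν hpropi.2.2.1 hpropi.2.2.2.1 hpropj.2.2.2.1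
          (hUdisj i j (Ne.symm hij)) hentry
        rw [hres, ENNReal.toReal_zero]
      have hgx : (basinAttr f (Λ i)).indicator (fun _ => (1:ℝ)) x = 0 := by
        apply indicator_of_notMem
        exact Set.disjoint_left.1
          (basin_disjoint (hΛc j) (hΛc i) (hΛne j) (hΛne i) (hdisj j i hij)) hxj
      rw [hgx]
      apply Tendsto.congr' _ tendsto_const_nhds
      filter_upwards [Ioo_mem_nhdsGT_of_mem ⟨le_refl (0:ℝ), hεx⟩] with ε hε
      exact (hzero ε hε).symm
  -- measurability and bound
  have hmeasα : ∀ᶠ ε in 𝓝[>] (0:ℝ), AEStronglyMeasurable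
      (fun x => ((ν ε) {t : ℕ → Par n |
        ∃ k : ℕ, 1 ≤ k ∧ iterP F k x t ∈ mSupp (με i ε)}).toReal) m := by
    filter_upwards [Ioo_mem_nhdsGT_of_mem ⟨le_refl (0:ℝ), hε₀⟩] with ε hε
    haveI := (hF.noise ε hε).1
    have hs := measurable_hitSet hFc (isClosed_mSupp (με i ε)) (F := F)
    have hmeas : Measurable fun x => (ν ε) (Prod.mk x ⁻¹'
        {p : M × (ℕ → Par n) | ∃ k : ℕ, 1 ≤ k ∧ iterP F k p.1 p.2 ∈ mSupp (με i ε)}) :=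
      measurable_measure_prodMk_left hs
    exact hmeas.ennreal_toReal.aestronglyMeasurable
  have hbound : ∀ᶠ ε in 𝓝[>] (0:ℝ), ∀ᵐ x ∂m,
      ‖((ν ε) {t : ℕ → Par n |
        ∃ k : ℕ, 1 ≤ k ∧ iterP F k x t ∈ mSupp (με i ε)}).toReal‖ ≤ 1 := by
    filter_upwards [Ioo_mem_nhdsGT_of_mem ⟨le_refl (0:ℝ), hε₀⟩] with ε hε
    haveI := (hF.noise ε hε).1
    filter_upwards with x
    rw [Real.norm_eq_abs, abs_of_nonneg ENNReal.toReal_nonneg]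
    calc ((ν ε) _).toReal ≤ ((1 : ℝ≥0∞)).toReal :=
          ENNReal.toReal_mono ENNReal.one_ne_top (prob_le_one)
      _ = 1 := ENNReal.toReal_one
  have hDCT := MeasureTheory.tendsto_integral_filter_of_dominated_convergence
    (μ := m) (bound := fun _ => (1:ℝ)) hmeasα hbound (integrable_const 1) hptwise
  have hgint : ∫ x, (basinAttr f (Λ i)).indicator (fun _ => (1:ℝ)) x ∂m
      = (m (basinAttr f (Λ i))).toReal := by
    rw [integral_indicator_const _ (measurable_basinAttr hfc (Λ i))]
    simp [Measure.real]
  rw [hgint] at hDCT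
  exact hDCT
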